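/- If f is holomorphic on the unit disk with |f(z)| < 1 for all |z| < 1, and f(z) = ∑ c_k z^k, then |c_k| ≤ 1 - |c_0|² for every k ≥ 1. -/

import Mathlib

/-!
Averaging `f` over the `k`-th roots of unity kills every coefficient whose index is not divisible
by `k`; evaluated at a `k`-th root of `w`, the average is `g w = ∑ c (k m) w ^ m`. So `g` is again
a holomorphic self-map of the unit disk, with `g 0 = c 0` and `g' 0 = c k`, and the claim is the
Schwarz–Pick inequality `‖g' 0‖ ≤ 1 - ‖g 0‖ ^ 2`, which follows from the Schwarz lemma applied to
`g` followed by the Möbius automorphism of the disk sending `g 0` to `0`.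
-/

open Metric Set Complex Finset FormalMultilinearSeries Real
open scoped NNReal ComplexConjugate

theorem IsPrimitiveRoot.sum_pow_pow {R : Type*} [CommRing R] [IsDomain R] {ζ : R} {k : ℕ}
    (hζ : IsPrimitiveRoot ζ k) (n : ℕ) :
    ∑ j ∈ range k, (ζ ^ j) ^ n = if k ∣ n then (k : R) else 0 := by
  simp_rw [← pow_mul, mul_comm _ n, pow_mul]
  split_ifs with hkn
  · simp [(hζ.pow_eq_one_iff_dvd n).2 hkn]
  · have hne : ζ ^ n - 1 ≠ 0 := sub_ne_zero.2 fun h => hkn ((hζ.pow_eq_one_iff_dvd n).1 h)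
    have hgeom := geom_sum_mul (ζ ^ n) k
    rw [← pow_mul, mul_comm n k, pow_mul, hζ.pow_eq_one, one_pow, sub_self] at hgeom
    exact (mul_eq_zero.1 hgeom).resolve_right hne

theorem IsPrimitiveRoot.hasSum_coeff_mul_pow_mul {K : Type*} [Field K] [CharZero K]
    [TopologicalSpace K] [IsTopologicalRing K] {ω : K} {k : ℕ} (hω : IsPrimitiveRoot ω k)
    (hk : k ≠ 0) {c : ℕ → K} {z : K} {F : ℕ → K}
    (hF : ∀ j, HasSum (fun n => c n * (ω ^ j * z) ^ n) (F j)) :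
    HasSum (fun m => c (k * m) * (z ^ k) ^ m) ((k : K)⁻¹ * ∑ j ∈ range k, F j) := by
  have hsum : HasSum (fun n => if k ∣ n then (k : K) * (c n * z ^ n) else 0)
      (∑ j ∈ range k, F j) := by
    convert hasSum_sum fun j _ => hF j using 1
    funext n
    simp_rw [mul_pow, ← mul_assoc, mul_comm (c n), mul_assoc, ← Finset.sum_mul, hω.sum_pow_pow]
    split_ifs <;> simp
  have hsub : HasSum (fun m => (k : K) * (c (k * m) * (z ^ k) ^ m)) (∑ j ∈ range k, F j) := by
    have hinj : Function.Injective (k * ·) := mul_right_injective₀ hk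
    convert (hinj.hasSum_iff ?_).2 hsum using 1
    · funext m
      simp [pow_mul]
    · intro n hn
      rw [if_neg]
      rintro ⟨m, rfl⟩
      exact hn ⟨m, rfl⟩
  simpa only [← mul_assoc, inv_mul_cancel₀ (Nat.cast_ne_zero.2 hk : (k : K) ≠ 0), one_mul]
    using hsub.mul_left (k : K)⁻¹

theorem hasFPowerSeriesOnBall_ofScalars {𝕜 : Type*} [DenselyNormedField 𝕜]
    {a : ℕ → 𝕜} {g : 𝕜 → 𝕜} {R : ℝ≥0} (hR : 0 < R)
    (hg : ∀ z ∈ ball (0 : 𝕜) R, HasSum (fun n => a n * z ^ n) (g z)) :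
    HasFPowerSeriesOnBall g (ofScalars 𝕜 a) 0 R where
  r_le := by
    refine ENNReal.le_of_forall_nnreal_lt fun r hr => ?_
    obtain ⟨z, hrz, hzR⟩ := NormedField.exists_lt_nnnorm_lt 𝕜 (ENNReal.coe_lt_coe.1 hr)
    refine le_trans (ENNReal.coe_le_coe.2 hrz.le) ((ofScalars 𝕜 a).le_radius_of_tendsto (l := 0) ?_)
    have := (hg z (mem_ball_zero_iff.2 hzR)).summable.tendsto_atTop_zero.norm
    simpa [ofScalars_norm] using this
  r_pos := ENNReal.coe_pos.2 hR
  hasSum {z} hz := by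
    rw [eball_coe] at hz
    simpa [ofScalars_apply_eq, mul_comm] using hg z hz

noncomputable def moebius (a w : ℂ) : ℂ := (w - a) / (1 - conj a * w)

theorem one_sub_conj_mul_ne_zero {a w : ℂ} (ha : ‖a‖ < 1) (hw : ‖w‖ < 1) :
    1 - conj a * w ≠ 0 := by
  refine sub_ne_zero.2 fun h => ?_
  have : ‖conj a * w‖ < 1 := by
    rw [norm_mul, RCLike.norm_conj]
    nlinarith [norm_nonneg a, norm_nonneg w]
  simp [← h] at this

theorem norm_moebius_lt_one {a w : ℂ} (ha : ‖a‖ < 1) (hw : ‖w‖ < 1) : ‖moebius a w‖ < 1 := by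
  have hden := one_sub_conj_mul_ne_zero ha hw
  rw [moebius, norm_div, div_lt_one (norm_pos_iff.2 hden),
    ← sq_lt_sq₀ (norm_nonneg _) (norm_nonneg _), Complex.sq_norm, Complex.sq_norm]
  have key : normSq (1 - conj a * w) - normSq (w - a) = (1 - normSq a) * (1 - normSq w) := by
    simp only [normSq_apply, sub_re, sub_im, mul_re, mul_im, one_re, one_im, conj_re, conj_im]
    ring
  have ha' : normSq a < 1 := by rw [normSq_eq_norm_sq]; nlinarith [norm_nonneg a]
  have hw' : normSq w < 1 := by rw [normSq_eq_norm_sq]; nlinarith [norm_nonneg w]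
  nlinarith [mul_pos (sub_pos.2 ha') (sub_pos.2 hw')]

theorem moebius_self (a : ℂ) : moebius a a = 0 := by simp [moebius]

theorem hasDerivAt_moebius_self {a : ℂ} (ha : ‖a‖ < 1) :
    HasDerivAt (moebius a) (1 - ‖a‖ ^ 2 : ℂ)⁻¹ a := by
  have hconj : conj a * a = (‖a‖ ^ 2 : ℂ) := by rw [conj_mul']
  have hden : (1 - ‖a‖ ^ 2 : ℂ) ≠ 0 := hconj ▸ one_sub_conj_mul_ne_zero ha ha
  have := ((hasDerivAt_id' a).sub_const a).div (((hasDerivAt_id' a).const_mul (conj a)).const_sub 1)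
    (one_sub_conj_mul_ne_zero ha ha)
  refine HasDerivAt.congr_deriv (f := moebius a) this ?_
  rw [hconj]
  field_simp
  ring

theorem norm_deriv_le_one_sub_sq {h : ℂ → ℂ} (hd : DifferentiableOn ℂ h (ball 0 1))
    (hm : MapsTo h (ball 0 1) (ball 0 1)) : ‖deriv h 0‖ ≤ 1 - ‖h 0‖ ^ 2 := by
  have h0 : (0 : ℂ) ∈ ball (0 : ℂ) 1 := mem_ball_self one_pos
  set a := h 0
  have ha : ‖a‖ < 1 := mem_ball_zero_iff.1 (hm h0)
  have hpos : 0 < 1 - ‖a‖ ^ 2 := by nlinarith [norm_nonneg a]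
  have hmoeb : ∀ w ∈ ball (0 : ℂ) 1, DifferentiableAt ℂ (moebius a) w := fun w hw =>
    ((differentiableAt_id.sub_const a).div ((differentiableAt_id.const_mul _).const_sub 1))
      (one_sub_conj_mul_ne_zero ha (mem_ball_zero_iff.1 hw))
  have hgd : DifferentiableOn ℂ (moebius a ∘ h) (ball 0 1) := fun w hw =>
    (hmoeb _ (hm hw)).comp_differentiableWithinAt w (hd w hw)
  have hgm : MapsTo (moebius a ∘ h) (ball 0 1) (closedBall (moebius a (h 0)) 1) := fun w hw => by
    rw [Function.comp_apply, moebius_self, mem_closedBall_zero_iff]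
    exact (norm_moebius_lt_one ha (mem_ball_zero_iff.1 (hm hw))).le
  have hschwarz := norm_deriv_le_one_of_mapsTo_ball hgd hgm one_pos
  have hchain : deriv (moebius a ∘ h) 0 = (1 - ‖a‖ ^ 2 : ℂ)⁻¹ * deriv h 0 :=
    ((hasDerivAt_moebius_self ha).comp 0
      (hd.differentiableAt (isOpen_ball.mem_nhds h0)).hasDerivAt).deriv
  rw [hchain, norm_mul, norm_inv] at hschwarz
  have hnorm : ‖(1 - ‖a‖ ^ 2 : ℂ)‖ = 1 - ‖a‖ ^ 2 := by
    rw [← ofReal_pow, ← ofReal_one, ← ofReal_sub, norm_real, Real.norm_of_nonneg hpos.le]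
  rw [hnorm, inv_mul_le_iff₀ hpos, mul_one] at hschwarz
  exact hschwarz

theorem norm_coeff_one_le_one_sub_sq {a : ℕ → ℂ} {g : ℂ → ℂ}
    (hg : ∀ z ∈ ball (0 : ℂ) 1, HasSum (fun n => a n * z ^ n) (g z))
    (hb : ∀ z ∈ ball (0 : ℂ) 1, ‖g z‖ < 1) : ‖a 1‖ ≤ 1 - ‖a 0‖ ^ 2 := by
  have hp : HasFPowerSeriesOnBall g (ofScalars ℂ a) 0 (1 : ℝ≥0) :=
    hasFPowerSeriesOnBall_ofScalars one_pos (by simpa using hg)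
  have hd : DifferentiableOn ℂ g (ball 0 1) := by
    simpa only [eball_coe, NNReal.coe_one] using hp.differentiableOn
  calc ‖a 1‖ = ‖deriv g 0‖ := by simp [hp.hasFPowerSeriesAt.deriv]
    _ ≤ 1 - ‖g 0‖ ^ 2 := norm_deriv_le_one_sub_sq hd fun z hz => mem_ball_zero_iff.2 (hb z hz)
    _ = 1 - ‖a 0‖ ^ 2 := by simp [← hp.coeff_zero fun _ => 0]

noncomputable def rootAverage (f : ℂ → ℂ) (k : ℕ) (w : ℂ) : ℂ :=
  (k : ℂ)⁻¹ * ∑ j ∈ range k, f (exp (2 * π * I / k) ^ j * w ^ (k⁻¹ : ℂ))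

theorem exp_pow_mul_cpow_inv_mem_ball {k : ℕ} (hk : k ≠ 0) (j : ℕ) {w : ℂ}
    (hw : w ∈ ball (0 : ℂ) 1) : exp (2 * π * I / k) ^ j * w ^ (k⁻¹ : ℂ) ∈ ball (0 : ℂ) 1 := by
  have hexp : (k⁻¹ : ℂ) = ((k⁻¹ : ℝ) : ℂ) := by push_cast; rfl
  rw [mem_ball_zero_iff] at hw ⊢
  rw [norm_mul, norm_pow, (isPrimitiveRoot_exp k hk).norm'_eq_one hk, one_pow, one_mul, hexp,
    norm_cpow_real]
  exact Real.rpow_lt_one (norm_nonneg w) hw (by positivity)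

theorem hasSum_rootAverage {f : ℂ → ℂ} {c : ℕ → ℂ} {k : ℕ} {w : ℂ} (hk : k ≠ 0)
    (hc : ∀ z ∈ ball (0 : ℂ) 1, HasSum (fun n => c n * z ^ n) (f z)) (hw : w ∈ ball (0 : ℂ) 1) :
    HasSum (fun m => c (k * m) * w ^ m) (rootAverage f k w) := by
  simpa only [rootAverage, cpow_nat_inv_pow w hk] using
    (isPrimitiveRoot_exp k hk).hasSum_coeff_mul_pow_mul hk
      fun j => hc _ (exp_pow_mul_cpow_inv_mem_ball hk j hw)

theorem norm_rootAverage_lt_one {f : ℂ → ℂ} {k : ℕ} {w : ℂ} (hk : k ≠ 0)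
    (hb : ∀ z ∈ ball (0 : ℂ) 1, ‖f z‖ < 1) (hw : w ∈ ball (0 : ℂ) 1) :
    ‖rootAverage f k w‖ < 1 := by
  rw [rootAverage, norm_mul, norm_inv, Complex.norm_natCast, inv_mul_lt_iff₀ (by positivity),
    mul_one]
  calc ‖∑ j ∈ range k, f (exp (2 * π * I / k) ^ j * w ^ (k⁻¹ : ℂ))‖
      ≤ ∑ j ∈ range k, ‖f (exp (2 * π * I / k) ^ j * w ^ (k⁻¹ : ℂ))‖ := norm_sum_le _ _
    _ < ∑ _j ∈ range k, 1 := sum_lt_sum_of_nonempty (nonempty_range_iff.2 hk) fun j _ =>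
        hb _ (exp_pow_mul_cpow_inv_mem_ball hk j hw)
    _ = k := by simp

theorem wiener_coefficient_estimate_general (f : ℂ → ℂ) (c : ℕ → ℂ)
    (hc : ∀ z ∈ Metric.ball (0 : ℂ) 1, HasSum (fun k => c k * z ^ k) (f z))
    (hb : ∀ z ∈ Metric.ball (0 : ℂ) 1, ‖f z‖ < 1) :
    ∀ k : ℕ, 1 ≤ k → ‖c k‖ ≤ 1 - ‖c 0‖ ^ 2 := by
  intro k hk
  have hk0 : k ≠ 0 := Nat.one_le_iff_ne_zero.1 hk
  simpa using norm_coeff_one_le_one_sub_sq (a := fun m => c (k * m))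
    (fun w hw => hasSum_rootAverage hk0 hc hw) (fun w hw => norm_rootAverage_lt_one hk0 hb hw)

/-- Wiener's coefficient estimate: if f maps the unit disk to itself and has Taylor
coefficients c, then |c_k| ≤ 1 - |c_0|² for k ≥ 1. -/
theorem wiener_coefficient_estimate (f : ℂ → ℂ) (c : ℕ → ℂ)
    (hf : DifferentiableOn ℂ f (Metric.ball (0 : ℂ) 1))
    (hc : ∀ z ∈ Metric.ball (0 : ℂ) 1, HasSum (fun k => c k * z ^ k) (f z))
    (hb : ∀ z ∈ Metric.ball (0 : ℂ) 1, ‖f z‖ < 1) :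
    ∀ k : ℕ, 1 ≤ k → ‖c k‖ ≤ 1 - ‖c 0‖ ^ 2 :=
  wiener_coefficient_estimate_general f c hc hb
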